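/- arXiv:1910.05324 — 9 statements merged into one kernel-verified Lean document; each statement's English description precedes it below -/
import Mathlib

section
/- Let (X, 𝒰) be a uniform space and f : X → X uniformly continuous. Then f has the topological shadowing property if and only if f^n has the topological shadowing property for all n ∈ ℕ. -/
open Set Filter Function

variable {X : Type*}

/-- An `E`-chain of length `n` from `x` to `y` for the map `f`. -/
def ChainFrom (f : X → X) (E : Set (X × X)) (n : ℕ) (x y : X) : Prop :=
  ∃ c : ℕ → X, c 0 = x ∧ c n = y ∧ ∀ i < n, (f (c i), c (i + 1)) ∈ E

/-- Topological chain transitivity on a uniform space. -/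
def ChainTransitive [UniformSpace X] (f : X → X) : Prop :=
  ∀ E ∈ uniformity X, ∀ x y : X, ∃ n ≥ 1, ChainFrom f E n x y

/-- Lengths of `E`-chains from `x` to itself (loops). -/
def LoopLengths (f : X → X) (E : Set (X × X)) (x : X) : Set ℕ :=
  {n | 1 ≤ n ∧ ChainFrom f E n x x}

/-- `g` is the greatest common divisor of the set `S` of naturals. -/
def IsGcdOfSet (g : ℕ) (S : Set ℕ) : Prop :=
  (∀ n ∈ S, g ∣ n) ∧ ∀ d : ℕ, (∀ n ∈ S, d ∣ n) → d ∣ g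

/-- The relation `x ∼_E y`: some `E`-chain from `x` to `y` has length a multiple of `ι`. -/
def SimE (f : X → X) (E : Set (X × X)) (ι : ℕ) (x y : X) : Prop :=
  ∃ n, ι ∣ n ∧ ChainFrom f E n x y

/-- Topological shadowing property on a uniform space. -/
def Shadowing [UniformSpace X] (f : X → X) : Prop :=
  ∀ E ∈ uniformity X, ∃ D ∈ uniformity X,
    ∀ x : ℕ → X, (∀ i, (f (x i), x (i + 1)) ∈ D) →
      ∃ y, ∀ n, (f^[n] y, x n) ∈ E

/-- Topological chain mixing on a uniform space. -/
def ChainMixing [UniformSpace X] (f : X → X) : Prop :=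
  ∀ D ∈ uniformity X, ∀ x y : X, ∃ N ≥ 1, ∀ n ≥ N, ChainFrom f D n x y

/-- A non-wandering point of `f`. -/
def NonWandering [TopologicalSpace X] (f : X → X) (x : X) : Prop :=
  ∀ V ∈ nhds x, ∃ n ≥ 1, (V ∩ f^[n] ⁻¹' V).Nonempty

/-- Topological transitivity. -/
def TopTransitive [TopologicalSpace X] (f : X → X) : Prop :=
  ∀ U V : Set X, IsOpen U → IsOpen V → U.Nonempty → V.Nonempty →
    ∃ n : ℕ, (U ∩ f^[n] ⁻¹' V).Nonempty

/-- A syndetic set of natural numbers (bounded gaps). -/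
def Syndetic (A : Set ℕ) : Prop :=
  ∃ k : ℕ, ∀ n : ℕ, ∃ m, n ≤ m ∧ m ≤ n + k ∧ m ∈ A

/-- A minimal (almost periodic) point of `f`. -/
def MinimalPt [TopologicalSpace X] (f : X → X) (y : X) : Prop :=
  ∀ V ∈ nhds y, Syndetic {n : ℕ | f^[n] y ∈ V}

/-- Equicontinuity of a dynamical system on a uniform space. -/
def Equicont [UniformSpace X] (f : X → X) : Prop :=
  ∀ E ∈ uniformity X, ∃ D ∈ uniformity X, ∀ n : ℕ, ∀ p ∈ D, (f^[n] p.1, f^[n] p.2) ∈ E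

/-! A `D`-pseudo-orbit `x` of `f^[n]` becomes a `D`-pseudo-orbit of `f` once the true orbit
segment `x i, f (x i), …, f^[n-1] (x i)` is inserted between `x i` and `x (i + 1)`: every jump
but the last one of a segment is exact. A point shadowing this refined pseudo-orbit shadows `x`
for `f^[n]` along the times `i * n`. -/

def fillOrbit (f : X → X) (n : ℕ) (x : ℕ → X) (m : ℕ) : X :=
  f^[m % n] (x (m / n))

theorem fillOrbit_mul_add (f : X → X) (x : ℕ → X) (q : ℕ) {n r : ℕ} (hr : r < n) :
    fillOrbit f n x (q * n + r) = f^[r] (x q) := by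
  simp only [fillOrbit, mul_comm q n, Nat.mul_add_mod, Nat.mod_eq_of_lt hr,
    Nat.mul_add_div (by omega : 0 < n), Nat.div_eq_of_lt hr, add_zero]

theorem fillOrbit_pseudoOrbit {f : X → X} {n : ℕ} {x : ℕ → X} {D : Set (X × X)}
    (hD : ∀ a, (a, a) ∈ D) (hn : 0 < n) (hx : ∀ i, (f^[n] (x i), x (i + 1)) ∈ D) (m : ℕ) :
    (f (fillOrbit f n x m), fillOrbit f n x (m + 1)) ∈ D := by
  obtain ⟨q, r, hr, rfl⟩ : ∃ q r, r < n ∧ m = q * n + r :=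
    ⟨m / n, m % n, Nat.mod_lt m hn, (Nat.div_add_mod' m n).symm⟩
  rw [fillOrbit_mul_add f x q hr, ← iterate_succ_apply' f]
  rcases (show r + 1 ≤ n from hr).lt_or_eq with hlt | heq
  · rw [add_assoc, fillOrbit_mul_add f x q hlt]
    exact hD _
  · have hm : q * n + r + 1 = (q + 1) * n + 0 := by rw [← heq]; ring
    rw [hm, fillOrbit_mul_add f x _ hn]
    subst heq
    exact hx q

theorem Shadowing.iterate [UniformSpace X] {f : X → X} (hf : Shadowing f) {n : ℕ} (hn : 0 < n) :
    Shadowing f^[n] := by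
  intro E hE
  obtain ⟨D, hD, hshadow⟩ := hf E hE
  refine ⟨D, hD, fun x hx => ?_⟩
  obtain ⟨y, hy⟩ := hshadow _ (fillOrbit_pseudoOrbit (fun _ => refl_mem_uniformity hD) hn hx)
  refine ⟨y, fun i => ?_⟩
  have h := hy (i * n + 0)
  rwa [fillOrbit_mul_add f x i hn, add_zero, mul_comm, iterate_mul] at h

theorem shadowing_iff_iterates_general [UniformSpace X] (f : X → X) :
    Shadowing f ↔ ∀ n : ℕ, 1 ≤ n → Shadowing (f^[n]) :=
  ⟨fun hf _ hn => hf.iterate hn, fun h => h 1 le_rfl⟩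

theorem shadowing_iff_iterates [UniformSpace X] (f : X → X)
    (hf : UniformContinuous f) :
    Shadowing f ↔ ∀ n : ℕ, 1 ≤ n → Shadowing (f^[n]) :=
  shadowing_iff_iterates_general f
end

section
/- Let (X, f) be a topologically chain transitive dynamical system on a uniform space and E an entourage. Then there exists ι_E ∈ ℕ such that for every y ∈ X, ι_E is the greatest common divisor of the lengths of all E-chains from y to itself. -/
open Set Filter Function

variable {X : Type*}

/-! Going once around a loop at `y` while travelling along chains `x → y → x` turns it into a
loop at `x` whose length exceeds that of the bare round trip by exactly the loop's length, so
the loop lengths at `x` and at `y` have the same common divisors. -/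

namespace ChainFrom

variable {f : X → X} {E : Set (X × X)} {a b n : ℕ} {x y z : X}

theorem append (hxy : ChainFrom f E a x y) (hyz : ChainFrom f E b y z) :
    ChainFrom f E (a + b) x z := by
  obtain ⟨c, hc0, hca, hc⟩ := hxy
  obtain ⟨d, hd0, hdb, hd⟩ := hyz
  refine ⟨fun i => if i ≤ a then c i else d (i - a), by simp [hc0], ?_, fun i hi => ?_⟩
  · rcases Nat.eq_zero_or_pos b with rfl | hb
    · simp [hca, ← hd0, hdb]
    · simp [show ¬a + b ≤ a by omega, hdb]
  · rcases lt_trichotomy i a with hia | rfl | hai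
    · simpa [hia.le, show i + 1 ≤ a by omega] using hc i hia
    · simpa [hca, ← hd0] using hd 0 (by omega)
    · simpa [show ¬i ≤ a by omega, show ¬i + 1 ≤ a by omega,
        show i + 1 - a = i - a + 1 by omega] using hd (i - a) (by omega)

theorem dvd_of_forall_mem_loopLengths {d : ℕ} (hd : ∀ m ∈ LoopLengths f E x, d ∣ m)
    (hxx : ChainFrom f E n x x) : d ∣ n := by
  rcases Nat.eq_zero_or_pos n with rfl | hn
  · exact dvd_zero d
  · exact hd n ⟨hn, hxx⟩

theorem forall_dvd_loopLengths {d : ℕ} (hxy : ChainFrom f E a x y)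
    (hyx : ChainFrom f E b y x) (hd : ∀ m ∈ LoopLengths f E x, d ∣ m) :
    ∀ m ∈ LoopLengths f E y, d ∣ m := by
  intro m hm
  have round_trip : d ∣ a + b := dvd_of_forall_mem_loopLengths hd (hxy.append hyx)
  have detour : d ∣ a + m + b := dvd_of_forall_mem_loopLengths hd ((hxy.append hm.2).append hyx)
  rw [add_right_comm] at detour
  exact (Nat.dvd_add_right round_trip).mp detour

theorem setGcd_loopLengths_eq (hxy : ChainFrom f E a x y) (hyx : ChainFrom f E b y x) :
    Nat.setGcd (LoopLengths f E x) = Nat.setGcd (LoopLengths f E y) :=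
  Nat.dvd_antisymm
    (Nat.dvd_setGcd_iff.mpr <| forall_dvd_loopLengths hxy hyx fun _ => Nat.setGcd_dvd_of_mem)
    (Nat.dvd_setGcd_iff.mpr <| forall_dvd_loopLengths hyx hxy fun _ => Nat.setGcd_dvd_of_mem)

end ChainFrom

theorem isGcdOfSet_setGcd (S : Set ℕ) : IsGcdOfSet (Nat.setGcd S) S :=
  ⟨fun _ => Nat.setGcd_dvd_of_mem, fun _ => Nat.dvd_setGcd_iff.mpr⟩

namespace ChainTransitive

variable [UniformSpace X] {f : X → X} {E : Set (X × X)}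

theorem setGcd_loopLengths_eq (ht : ChainTransitive f) (hE : E ∈ uniformity X) (x y : X) :
    Nat.setGcd (LoopLengths f E x) = Nat.setGcd (LoopLengths f E y) := by
  obtain ⟨a, -, hxy⟩ := ht E hE x y
  obtain ⟨b, -, hyx⟩ := ht E hE y x
  exact hxy.setGcd_loopLengths_eq hyx

theorem setGcd_loopLengths_pos (ht : ChainTransitive f) (hE : E ∈ uniformity X) (x : X) :
    0 < Nat.setGcd (LoopLengths f E x) := by
  obtain ⟨n, hn, hxx⟩ := ht E hE x x
  refine Nat.pos_of_ne_zero fun h => ?_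
  have : n = 0 := Nat.setGcd_eq_zero_iff.mp h ⟨hn, hxx⟩
  omega

end ChainTransitive

theorem exists_common_gcd_of_loops_general [UniformSpace X] (f : X → X)
    (ht : ChainTransitive f)
    (E : Set (X × X)) (hE : E ∈ uniformity X) :
    ∃ ι : ℕ, 1 ≤ ι ∧ ∀ y : X, IsGcdOfSet ι (LoopLengths f E y) := by
  rcases isEmpty_or_nonempty X with hX | ⟨⟨x₀⟩⟩
  · exact ⟨1, le_rfl, isEmptyElim⟩
  refine ⟨Nat.setGcd (LoopLengths f E x₀), ht.setGcd_loopLengths_pos hE x₀, fun y => ?_⟩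
  rw [ht.setGcd_loopLengths_eq hE x₀ y]
  exact isGcdOfSet_setGcd _

theorem exists_common_gcd_of_loops [UniformSpace X] (f : X → X)
    (hf : UniformContinuous f) (ht : ChainTransitive f)
    (E : Set (X × X)) (hE : E ∈ uniformity X) :
    ∃ ι : ℕ, 1 ≤ ι ∧ ∀ y : X, IsGcdOfSet ι (LoopLengths f E y) :=
  exists_common_gcd_of_loops_general f ht E hE
end

section
/- Let (X, f) be topologically chain transitive on a uniform space, E an entourage, and x ∼_E y. Then every E-chain from x to y has length a multiple of ι_E. -/
open Set Filter Function

variable {X : Type*}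

/-!
Closing any chain from `x` to `y` with a fixed chain from `y` back to `x`, which chain
transitivity provides, gives a loop at `x`, whose length `ι` divides. Hence all `E`-chains
from `x` to `y` have the same length modulo `ι`, and one of them has length divisible by `ι`.
-/

section

variable {f : X → X} {E : Set (X × X)}

theorem ChainFrom.append_s4 {a b : ℕ} {x y z : X}
    (hxy : ChainFrom f E a x y) (hyz : ChainFrom f E b y z) :
    ChainFrom f E (a + b) x z := by
  obtain ⟨c₁, hc₁0, hc₁a, hc₁⟩ := hxy
  obtain ⟨c₂, hc₂0, hc₂b, hc₂⟩ := hyz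
  let c : ℕ → X := fun i => if i ≤ a then c₁ i else c₂ (i - a)
  have hc_le {i : ℕ} (hi : i ≤ a) : c i = c₁ i := if_pos hi
  have hc_ge {i : ℕ} (hi : a ≤ i) : c i = c₂ (i - a) := by
    rcases hi.eq_or_lt with rfl | hi
    · rw [hc_le le_rfl, hc₁a, Nat.sub_self, hc₂0]
    · exact if_neg hi.not_ge
  refine ⟨c, by rw [hc_le (Nat.zero_le a), hc₁0], by rw [hc_ge (Nat.le_add_right a b),
    Nat.add_sub_cancel_left, hc₂b], fun i hi => ?_⟩
  rcases lt_or_ge i a with hia | hai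
  · rw [hc_le hia.le, hc_le hia]
    exact hc₁ i hia
  · rw [hc_ge hai, hc_ge (hai.trans (Nat.le_add_right i 1)), Nat.sub_add_comm hai]
    exact hc₂ (i - a) (by omega)

theorem ChainFrom.length_modEq {ι m n k : ℕ} {x y : X}
    (hloops : ∀ l ∈ LoopLengths f E x, ι ∣ l) (hm : ChainFrom f E m x y)
    (hn : ChainFrom f E n x y) (hk : ChainFrom f E k y x) (hk1 : 1 ≤ k) :
    m ≡ n [MOD ι] := by
  have hmk : m + k ≡ 0 [MOD ι] :=
    Nat.modEq_zero_iff_dvd.2 (hloops _ ⟨by omega, hm.append_s4 hk⟩)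
  have hnk : n + k ≡ 0 [MOD ι] :=
    Nat.modEq_zero_iff_dvd.2 (hloops _ ⟨by omega, hn.append_s4 hk⟩)
  exact Nat.ModEq.add_right_cancel' k (hmk.trans hnk.symm)

end

theorem length_multiple_of_iota_general [UniformSpace X] (f : X → X)
    (ht : ChainTransitive f)
    (E : Set (X × X)) (hE : E ∈ uniformity X)
    (ι : ℕ) (hgcd : ∀ y : X, IsGcdOfSet ι (LoopLengths f E y))
    (x y : X) (hxy : SimE f E ι x y) :
    ∀ m : ℕ, ChainFrom f E m x y → ι ∣ m := by
  intro m hm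
  obtain ⟨n, hιn, hn⟩ := hxy
  obtain ⟨k, hk1, hk⟩ := ht E hE y x
  have hmn : m ≡ n [MOD ι] := hm.length_modEq (hgcd x).1 hn hk hk1
  exact (hmn.dvd_iff dvd_rfl).2 hιn

theorem length_multiple_of_iota [UniformSpace X] (f : X → X)
    (hf : UniformContinuous f) (ht : ChainTransitive f)
    (E : Set (X × X)) (hE : E ∈ uniformity X)
    (ι : ℕ) (hι : 1 ≤ ι) (hgcd : ∀ y : X, IsGcdOfSet ι (LoopLengths f E y))
    (x y : X) (hxy : SimE f E ι x y) :
    ∀ m : ℕ, ChainFrom f E m x y → ι ∣ m :=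
  length_multiple_of_iota_general f ht E hE ι hgcd x y hxy
end

section
/- Let (X, f) be a topologically chain transitive dynamical system on a uniform space, E an entourage, and x ∈ X. Then the equivalence class [x]_E under ∼_E is both open and closed in X. -/
open Set Filter Function

variable {X : Type*}

open scoped SetRel Uniformity

namespace ChainFrom

variable {f : X → X} {E F : Set (X × X)} {n m : ℕ} {x y z : X}

lemma zero_iff : ChainFrom f E 0 x y ↔ x = y := by
  constructor
  · rintro ⟨c, rfl, rfl, -⟩
    rfl
  · rintro rfl
    exact ⟨fun _ => x, rfl, rfl, fun _ h => absurd h (Nat.not_lt_zero _)⟩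

lemma succ_iff : ChainFrom f E (n + 1) x z ↔ ∃ y, ChainFrom f E n x y ∧ (f y, z) ∈ E := by
  constructor
  · rintro ⟨c, hc0, hcn, hstep⟩
    exact ⟨c n, ⟨c, hc0, rfl, fun i hi => hstep i (by omega)⟩, hcn ▸ hstep n n.lt_succ_self⟩
  · rintro ⟨y, ⟨c, hc0, hcn, hstep⟩, hyz⟩
    refine ⟨fun i => if i ≤ n then c i else z, by simpa using hc0, by simp, fun i hi => ?_⟩
    rcases Nat.lt_succ_iff_lt_or_eq.1 hi with hi | rfl
    · simpa [hi.le, Nat.succ_le_of_lt hi] using hstep i hi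
    · simpa [hcn] using hyz

lemma mono (hEF : E ⊆ F) (h : ChainFrom f E n x y) : ChainFrom f F n x y :=
  let ⟨c, hc0, hcn, hstep⟩ := h
  ⟨c, hc0, hcn, fun i hi => hEF (hstep i hi)⟩

lemma trans (hxy : ChainFrom f E m x y) (hyz : ChainFrom f E n y z) :
    ChainFrom f E (m + n) x z := by
  induction n generalizing z with
  | zero =>
    rw [zero_iff] at hyz
    exact hyz ▸ hxy
  | succ n ih =>
    obtain ⟨w, hyw, hwz⟩ := succ_iff.1 hyz
    exact succ_iff.2 ⟨w, ih hyw, hwz⟩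

end ChainFrom

/-- Chain transitivity gives a `D`-loop at `y`; moving its last point to `z` keeps it an `E`-chain,
and its length, being that of an `E`-loop, is a multiple of `ι`. -/
lemma SimE.of_mem_comp [UniformSpace X] {f : X → X} (ht : ChainTransitive f)
    {D E : Set (X × X)} (hD : D ∈ 𝓤 X) (hDE : D ○ D ⊆ E) {ι : ℕ} {x y z : X}
    (hloops : ∀ n ∈ LoopLengths f E y, ι ∣ n) (hxy : SimE f E ι x y) (hyz : (y, z) ∈ D) :
    SimE f E ι x z := by
  obtain ⟨n, hιn, hchain⟩ := hxy
  have hD_sub : D ⊆ E := fun p hp => hDE ⟨p.2, hp, refl_mem_uniformity hD⟩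
  obtain ⟨m, hm, hloop⟩ := ht D hD y y
  obtain ⟨k, rfl⟩ : ∃ k, m = k + 1 := ⟨m - 1, by omega⟩
  have hιm : ι ∣ k + 1 := hloops _ ⟨hm, hloop.mono hD_sub⟩
  obtain ⟨w, hyw, hwy⟩ := ChainFrom.succ_iff.1 hloop
  have hyz_chain : ChainFrom f E (k + 1) y z :=
    ChainFrom.succ_iff.2 ⟨w, hyw.mono hD_sub, hDE ⟨y, hwy, hyz⟩⟩
  exact ⟨n + (k + 1), hιn.add hιm, hchain.trans hyz_chain⟩

lemma isClopen_of_ball_subset [UniformSpace X] {s : Set X} {D : Set (X × X)} (hD : D ∈ 𝓤 X)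
    [SetRel.IsSymm D] (hs : ∀ y ∈ s, UniformSpace.ball y D ⊆ s) : IsClopen s := by
  refine ⟨isOpen_compl_iff.1 <| isOpen_iff_mem_nhds.2 fun y hy => ?_,
    isOpen_iff_mem_nhds.2 fun y hy => mem_of_superset (UniformSpace.ball_mem_nhds y hD) (hs y hy)⟩
  filter_upwards [UniformSpace.ball_mem_nhds y hD] with z hz hzs
  exact hy (hs z hzs (SetRel.symm D hz))

theorem simE_class_clopen_general [UniformSpace X] (f : X → X)
    (ht : ChainTransitive f)
    (E : Set (X × X)) (hE : E ∈ uniformity X)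
    (ι : ℕ) (hgcd : ∀ y : X, IsGcdOfSet ι (LoopLengths f E y))
    (x : X) :
    IsOpen {y | SimE f E ι x y} ∧ IsClosed {y | SimE f E ι x y} := by
  obtain ⟨D, hD, hDsymm, hDE⟩ := comp_symm_mem_uniformity_sets hE
  have hclopen : IsClopen {y | SimE f E ι x y} :=
    isClopen_of_ball_subset hD fun y hxy _ hyz =>
      hxy.of_mem_comp ht hD hDE (hgcd y).1 hyz
  exact ⟨hclopen.isOpen, hclopen.isClosed⟩

theorem simE_class_clopen [UniformSpace X] (f : X → X)
    (hf : UniformContinuous f) (ht : ChainTransitive f)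
    (E : Set (X × X)) (hE : E ∈ uniformity X)
    (ι : ℕ) (hι : 1 ≤ ι) (hgcd : ∀ y : X, IsGcdOfSet ι (LoopLengths f E y))
    (x : X) :
    IsOpen {y | SimE f E ι x y} ∧ IsClosed {y | SimE f E ι x y} :=
  simE_class_clopen_general f ht E hE ι hgcd x
end

section
/- Let (X, f) be a topologically chain transitive dynamical system on a compact uniform space. Then for each entourage E there exists M ∈ ℕ such that for all x, y ∈ X there is an E-chain from x to y of length at most M. -/
open Set Filter Function

variable {X : Type*}

/-!
Choose a symmetric entourage `D` with `D ○ D ○ D ⊆ E`, and finitely many points `z` such that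
every `x` satisfies `(x, z) ∈ D` and `(f x, f z) ∈ D` for one of them (compactness and uniform
continuity). Chain transitivity gives a `D`-chain between any two of these points, and the
longest of these finitely many chains bounds everything: replacing the endpoints `z`, `w` of a
`D`-chain by nearby `x`, `y` yields a `D ○ D ○ D`-chain from `x` to `y` of the same length.
-/

open scoped SetRel

section Chains

variable {f : X → X}

theorem ChainFrom.mono_s10 {E F : Set (X × X)} (hEF : E ⊆ F) {n : ℕ} {x y : X}
    (h : ChainFrom f E n x y) : ChainFrom f F n x y := by
  obtain ⟨c, hc0, hcn, hc⟩ := h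
  exact ⟨c, hc0, hcn, fun i hi => hEF (hc i hi)⟩

theorem ChainFrom.of_near_endpoints {A D B : SetRel X X} [A.IsRefl] [B.IsRefl] {n : ℕ}
    {x y z w : X} (h : ChainFrom f D n z w) (hn : n ≠ 0) (hx : (f x, f z) ∈ A)
    (hy : (w, y) ∈ B) : ChainFrom f (A ○ D ○ B) n x y := by
  obtain ⟨c, rfl, rfl, hc⟩ := h
  refine ⟨update (update c 0 x) n y, ?_, update_self .., fun i hi => ?_⟩
  · rw [update_of_ne hn.symm, update_self]
  have hstart : (f (update (update c 0 x) n y i), f (c i)) ∈ A := by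
    rw [update_of_ne hi.ne]
    rcases eq_or_ne i 0 with rfl | hi0
    · rwa [update_self]
    · rw [update_of_ne hi0]
      exact SetRel.rfl A
  have hend : (c (i + 1), update (update c 0 x) n y (i + 1)) ∈ B := by
    rcases eq_or_ne (i + 1) n with hin | hin
    · rwa [hin, update_self]
    · rw [update_of_ne hin, update_of_ne i.succ_ne_zero]
      exact SetRel.rfl B
  exact SetRel.prodMk_mem_comp (SetRel.prodMk_mem_comp hstart (hc i hi)) hend

theorem ChainTransitive.exists_bound_on_finite [UniformSpace X] (ht : ChainTransitive f)
    {D : Set (X × X)} (hD : D ∈ uniformity X) {t : Set X} (htf : t.Finite) :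
    ∃ M : ℕ, ∀ z ∈ t, ∀ w ∈ t, ∃ n : ℕ, 1 ≤ n ∧ n ≤ M ∧ ChainFrom f D n z w := by
  choose N hN1 hN using ht D hD
  obtain ⟨M, hM⟩ := ((htf.prod htf).image fun p => N p.1 p.2).bddAbove
  exact ⟨M, fun z hz w hw => ⟨N z w, hN1 z w, hM ⟨(z, w), ⟨hz, hw⟩, rfl⟩, hN z w⟩⟩

end Chains

theorem bounded_chain_length [UniformSpace X] [CompactSpace X]
    (f : X → X) (hf : UniformContinuous f) (ht : ChainTransitive f) :
    ∀ E ∈ uniformity X, ∃ M : ℕ, ∀ x y : X,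
      ∃ n : ℕ, 1 ≤ n ∧ n ≤ M ∧ ChainFrom f E n x y := by
  intro E hE
  obtain ⟨D, hD, hDsymm, hDE⟩ := comp_comp_symm_mem_uniformity_sets hE
  have := isRefl_of_mem_uniformity hD
  have := hDsymm
  obtain ⟨t, htf, hcover⟩ := isCompact_univ.totallyBounded _ (inter_mem hD (hf hD))
  obtain ⟨M, hM⟩ := ht.exists_bound_on_finite hD htf
  refine ⟨M, fun x y => ?_⟩
  obtain ⟨z, hzt, hxz⟩ := mem_iUnion₂.1 (hcover (mem_univ x))
  obtain ⟨w, hwt, hyw⟩ := mem_iUnion₂.1 (hcover (mem_univ y))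
  obtain ⟨n, hn1, hnM, hchain⟩ := hM z hzt w hwt
  exact ⟨n, hn1, hnM,
    (hchain.of_near_endpoints (A := D) (B := D) (by omega) hxz.2 (SetRel.symm D hyw.1)).mono_s10 hDE⟩
end

section
/- Let (X, f) be a dynamical system on a Hausdorff uniform space and x ∈ Ω(f) a non-wandering point. Then for every entourage U, the set N_f(U[x], U[x]) = {n ∈ ℕ₀ : U[x] ∩ f^{-n}(U[x]) ≠ ∅} is infinite. -/
open Set Filter Function

variable {X : Type*}

open Topology

/-!
If `x` is periodic, all multiples of its period are return times. Otherwise, by continuity and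
the Hausdorff property, each `k ≥ 1` is excluded as a return time of all small enough
neighbourhoods of `x`; shrinking to exclude `1, …, N` at once, non-wandering yields a return
time beyond `N`.
-/

/-- The hitting times `N_f(A, B)` of `B` from `A`. -/
def hittingTimes (f : X → X) (A B : Set X) : Set ℕ :=
  {n | (A ∩ f^[n] ⁻¹' B).Nonempty}

lemma Function.IsPeriodicPt.hittingTimes_infinite {f : X → X} {x : X} {p : ℕ} {A : Set X}
    (hx : IsPeriodicPt f p x) (hp : 0 < p) (hxA : x ∈ A) : (hittingTimes f A A).Infinite :=
  infinite_of_injective_forall_mem (mul_right_injective₀ hp.ne') fun m =>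
    ⟨x, hxA, by simpa [hittingTimes, (hx.mul_const m).eq] using hxA⟩

lemma eventually_smallSets_disjoint_preimage [TopologicalSpace X] [T2Space X] {g : X → X}
    {x : X} (hg : ContinuousAt g x) (hx : g x ≠ x) :
    ∀ᶠ V in (𝓝 x).smallSets, Disjoint V (g ⁻¹' V) := by
  obtain ⟨u, v, hu, hv, huv⟩ := t2_separation_nhds hx.symm
  refine eventually_smallSets.2 ⟨u ∩ g ⁻¹' v, inter_mem hu (hg hv), fun V hV => ?_⟩
  exact disjoint_left.2 fun y hy hgy => disjoint_left.1 huv (hV hgy).1 (hV hy).2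

lemma NonWandering.hittingTimes_infinite [TopologicalSpace X] [T2Space X] {f : X → X} {x : X}
    (hf : Continuous f) (hx : NonWandering f x) {W : Set X} (hW : W ∈ 𝓝 x) :
    (hittingTimes f W W).Infinite := by
  by_cases hper : ∃ p, 0 < p ∧ IsPeriodicPt f p x
  · obtain ⟨p, hp, hxp⟩ := hper
    exact hxp.hittingTimes_infinite hp (mem_of_mem_nhds hW)
  push Not at hper
  refine infinite_of_forall_exists_gt fun N => ?_
  have hsmall : ∀ᶠ V in (𝓝 x).smallSets,
      V ⊆ W ∧ ∀ k ∈ Finset.Icc 1 N, Disjoint V (f^[k] ⁻¹' V) :=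
    (eventually_smallSets_subset.2 hW).and <| (Finset.eventually_all _).2 fun k hk =>
      eventually_smallSets_disjoint_preimage (hf.iterate k).continuousAt
        (hper k (Finset.mem_Icc.1 hk).1)
  obtain ⟨V, hV, hVgood⟩ := eventually_smallSets.1 hsmall
  obtain ⟨hVW, hVdisj⟩ := hVgood V subset_rfl
  obtain ⟨n, hn, y, hyV, hfyV⟩ := hx V hV
  refine ⟨n, ⟨y, hVW hyV, hVW hfyV⟩, lt_of_not_ge fun hnN => ?_⟩
  exact disjoint_left.1 (hVdisj n (Finset.mem_Icc.2 ⟨hn, hnN⟩)) hyV hfyV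

theorem nonwandering_return_times_infinite [UniformSpace X] [T2Space X]
    (f : X → X) (hf : UniformContinuous f)
    (x : X) (hx : NonWandering f x)
    (U : Set (X × X)) (hU : U ∈ uniformity X) :
    {n : ℕ | ({y | (x, y) ∈ U} ∩ f^[n] ⁻¹' {y | (x, y) ∈ U}).Nonempty}.Infinite :=
  hx.hittingTimes_infinite hf.continuous (mem_nhds_left x hU)
end

section
/- Let (X, f) be a dynamical system on a uniform space with the topological shadowing property, and let x ∈ Ω(f). Then for every entourage U there exist k ∈ ℕ and a point w ∈ U[x] such that f^{nk}(w) ∈ U[x] for all n ∈ ℕ. -/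
open Set Filter Function

variable {X : Type*}

/-! A non-wandering point `x` has a point `z` near it with `f^[k] z` also near `x`. The
`k`-periodic sequence `z, f z, …, f^[k-1] z, z, …` is then a pseudo-orbit whose only jumps are
the small ones from `f^[k] z` back to `z`, and a point shadowing it stays close to `z`, hence to
`x`, at every multiple of `k`. -/

open scoped Uniformity

def IsPseudoOrbit (f : X → X) (D : Set (X × X)) (c : ℕ → X) : Prop :=
  ∀ i, (f (c i), c (i + 1)) ∈ D

theorem isPseudoOrbit_iterate_mod {f : X → X} {D : Set (X × X)} (hD : ∀ a, (a, a) ∈ D)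
    {k : ℕ} (hk : 0 < k) {z : X} (hz : (f^[k] z, z) ∈ D) :
    IsPseudoOrbit f D (fun i => f^[i % k] z) := fun i => by
  dsimp only
  rw [← iterate_succ_apply' f, Nat.succ_eq_add_one, ← Nat.mod_add_mod]
  obtain hlt | heq : i % k + 1 < k ∨ i % k + 1 = k := Nat.lt_or_eq_of_le (Nat.mod_lt i hk)
  · rw [Nat.mod_eq_of_lt hlt]
    exact hD _
  · rw [heq, Nat.mod_self]
    exact hz

theorem Shadowing.exists_forall_iterate_mul_mem [UniformSpace X] {f : X → X}
    (hsh : Shadowing f) {V : Set (X × X)} (hV : V ∈ 𝓤 X) :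
    ∃ D ∈ 𝓤 X, ∀ (z : X) (k : ℕ), 0 < k → (f^[k] z, z) ∈ D →
      ∃ y, ∀ n, (f^[n * k] y, z) ∈ V := by
  obtain ⟨D, hD, hshadow⟩ := hsh V hV
  refine ⟨D, hD, fun z k hk hz => ?_⟩
  obtain ⟨y, hy⟩ :=
    hshadow _ (isPseudoOrbit_iterate_mod (fun _ => refl_mem_uniformity hD) hk hz)
  exact ⟨y, fun n => by simpa only [Nat.mul_mod_left, iterate_zero, id] using hy (n * k)⟩

theorem shadowing_nonwandering_periodic_returns_general [UniformSpace X]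
    (f : X → X) (hsh : Shadowing f)
    (x : X) (hx : NonWandering f x)
    (U : Set (X × X)) (hU : U ∈ uniformity X) :
    ∃ k : ℕ, 1 ≤ k ∧ ∃ w ∈ {y | (x, y) ∈ U},
      ∀ n : ℕ, 1 ≤ n → f^[n * k] w ∈ {y | (x, y) ∈ U} := by
  obtain ⟨V, hV, hVsymm, hVU⟩ := comp_symm_mem_uniformity_sets hU
  obtain ⟨D, hD, hshadow⟩ := hsh.exists_forall_iterate_mul_mem hV
  obtain ⟨W, hW, hWsymm, hWDV⟩ := comp_symm_mem_uniformity_sets (inter_mem hD hV)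
  obtain ⟨k, hk, z, hxz, hxkz⟩ : ∃ k ≥ 1, ∃ z, (x, z) ∈ W ∧ (x, f^[k] z) ∈ W :=
    hx _ (mem_nhds_left x hW)
  have hxzV : (x, z) ∈ V := (hWDV (subset_comp_self_of_mem_uniformity hW hxz)).2
  obtain ⟨w, hw⟩ := hshadow z k hk (hWDV ⟨x, SetRel.symm W hxkz, hxz⟩).1
  have hreturn : ∀ n, f^[n * k] w ∈ {y | (x, y) ∈ U} := fun n =>
    hVU ⟨z, hxzV, SetRel.symm V (hw n)⟩
  exact ⟨k, hk, w, by simpa using hreturn 0, fun n _ => hreturn n⟩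

theorem shadowing_nonwandering_periodic_returns [UniformSpace X]
    (f : X → X) (hf : UniformContinuous f) (hsh : Shadowing f)
    (x : X) (hx : NonWandering f x)
    (U : Set (X × X)) (hU : U ∈ uniformity X) :
    ∃ k : ℕ, 1 ≤ k ∧ ∃ w ∈ {y | (x, y) ∈ U},
      ∀ n : ℕ, 1 ≤ n → f^[n * k] w ∈ {y | (x, y) ∈ U} :=
  shadowing_nonwandering_periodic_returns_general f hsh x hx U hU
end

section
/- Let (X, f) be a dynamical system on a uniform space with the topological shadowing property. If f is totally transitive, then f is weakly mixing. -/
open Set Filter Function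

variable {X : Type*}

/-!
Total transitivity yields, at every scale `D`, loops at `x` whose lengths are `1` modulo any
given `k`; hence the loop lengths have gcd `1`, every large number is a loop length, and `f` is
chain mixing. Shadowing a chain from `u ∈ U` to `v ∈ V` of any large length `n` gives a point of
`U ∩ f^[n] ⁻¹' V`, so `f` is topologically mixing, and a product of mixing maps is mixing.
-/

lemma exists_seq_append (c d : ℕ → X) (m : ℕ) (h : c m = d 0) :
    ∃ e : ℕ → X, (∀ k ≤ m, e k = c k) ∧ ∀ k, e (m + k) = d k := by
  refine ⟨fun k => if k ≤ m then c k else d (k - m), fun k hk => if_pos hk, fun k => ?_⟩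
  rcases Nat.eq_zero_or_pos k with rfl | hk
  · simp [h]
  · simp [hk.ne']

section Chains

variable {f : X → X} {E : Set (X × X)} {m n : ℕ} {x y z : X}

lemma chainFrom_zero (f : X → X) (E : Set (X × X)) (x : X) : ChainFrom f E 0 x x :=
  ⟨fun _ => x, rfl, rfl, fun _ h => absurd h (Nat.not_lt_zero _)⟩

lemma chainFrom_one (h : (f x, y) ∈ E) : ChainFrom f E 1 x y :=
  ⟨fun k => if k = 0 then x else y, rfl, rfl, fun i hi => by
    obtain rfl : i = 0 := by omega
    simpa using h⟩

lemma ChainFrom.append_s16 (h₁ : ChainFrom f E m x y) (h₂ : ChainFrom f E n y z) :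
    ChainFrom f E (m + n) x z := by
  obtain ⟨c, rfl, rfl, hc⟩ := h₁
  obtain ⟨d, hd0, rfl, hd⟩ := h₂
  obtain ⟨e, he₁, he₂⟩ := exists_seq_append c d m hd0.symm
  refine ⟨e, he₁ 0 (Nat.zero_le _), he₂ n, fun i hi => ?_⟩
  rcases lt_or_ge i m with hi' | hi'
  · rw [he₁ i hi'.le, he₁ (i + 1) hi']
    exact hc i hi'
  · obtain ⟨j, rfl⟩ := Nat.exists_eq_add_of_le hi'
    rw [he₂, add_assoc, he₂]
    exact hd j (by omega)

lemma chainFrom_iterate (hE : ∀ z, (z, z) ∈ E) (n : ℕ) (x : X) :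
    ChainFrom f E n x (f^[n] x) := by
  induction n with
  | zero => exact chainFrom_zero f E x
  | succ n ih => exact ih.append_s16 (chainFrom_one (by rw [iterate_succ_apply']; exact hE _))

lemma ChainFrom.exists_pseudoOrbit (h : ChainFrom f E n x y) (hE : ∀ z, (z, z) ∈ E) :
    ∃ p : ℕ → X, p 0 = x ∧ p n = y ∧ ∀ i, (f (p i), p (i + 1)) ∈ E := by
  obtain ⟨c, rfl, rfl, hc⟩ := h
  obtain ⟨p, hp₁, hp₂⟩ := exists_seq_append c (f^[·] (c n)) n rfl
  refine ⟨p, hp₁ 0 (Nat.zero_le _), hp₁ n le_rfl, fun i => ?_⟩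
  rcases lt_or_ge i n with hi | hi
  · rw [hp₁ i hi.le, hp₁ (i + 1) hi]
    exact hc i hi
  · obtain ⟨j, rfl⟩ := Nat.exists_eq_add_of_le hi
    rw [hp₂, add_assoc, hp₂, iterate_succ_apply']
    exact hE _

lemma chainFrom_of_mem_closure_loopLengths (h : n ∈ AddSubmonoid.closure (LoopLengths f E x)) :
    ChainFrom f E n x x :=
  AddSubmonoid.closure_induction (fun _ hk => hk.2) (chainFrom_zero f E x)
    (fun _ _ _ _ => ChainFrom.append_s16) h

end Chains

def TopMixing [TopologicalSpace X] (f : X → X) : Prop :=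
  ∀ U V : Set X, IsOpen U → IsOpen V → U.Nonempty → V.Nonempty →
    ∀ᶠ n in atTop, (U ∩ f^[n] ⁻¹' V).Nonempty

section Dynamics

variable [UniformSpace X] {f : X → X}

/-- Transitivity of `f^[k]` lets one jump from near `f x` to near `y` in a multiple of `k` steps;
closing the two gaps gives a chain whose length is `1` modulo `k`. -/
lemma TopTransitive.exists_chainFrom {k : ℕ} (hk : TopTransitive (f^[k])) {D : Set (X × X)}
    (hD : D ∈ uniformity X) (x y : X) : ∃ m, ChainFrom f D (k * m + 1) x y := by
  obtain ⟨t, ht, hto, _, htD⟩ := comp_open_symm_mem_uniformity_sets hD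
  have htD' : t ⊆ D := fun p hp => htD ⟨p.2, hp, refl_mem_uniformity ht⟩
  obtain ⟨m, z, hxz, hzy⟩ := hk _ _ (UniformSpace.isOpen_ball (f x) hto)
    (UniformSpace.isOpen_ball y hto) ⟨f x, refl_mem_uniformity ht⟩ ⟨y, refl_mem_uniformity ht⟩
  change (f x, z) ∈ t at hxz
  replace hzy : (f^[k * m] z, y) ∈ t := by
    rw [iterate_mul]
    exact SetRel.symm (R := t) hzy
  refine ⟨m, ?_⟩
  rcases hkm : k * m with _ | j
  · rw [hkm, iterate_zero_apply] at hzy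
    exact chainFrom_one (htD ⟨z, hxz, hzy⟩)
  · rw [hkm, iterate_succ_apply'] at hzy
    rw [add_comm]
    exact (chainFrom_one (htD' hxz)).append_s16
      ((chainFrom_iterate (fun _ => refl_mem_uniformity hD) j z).append_s16 (chainFrom_one (htD' hzy)))

lemma setGcd_loopLengths_eq_one (htt : ∀ k, 1 ≤ k → TopTransitive (f^[k]))
    {D : Set (X × X)} (hD : D ∈ uniformity X) (x : X) :
    Nat.setGcd (LoopLengths f D x) = 1 := by
  have hmem : ∀ k, 1 ≤ k → ∃ m, k * m + 1 ∈ LoopLengths f D x := fun k hk =>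
    ((htt k hk).exists_chainFrom hD x x).imp fun _ h => ⟨by omega, h⟩
  have hpos : 0 < Nat.setGcd (LoopLengths f D x) := by
    obtain ⟨m, hm⟩ := hmem 1 le_rfl
    exact Nat.pos_of_dvd_of_pos (Nat.setGcd_dvd_of_mem hm) (by omega)
  obtain ⟨m, hm⟩ := hmem _ hpos
  exact Nat.dvd_one.mp ((Nat.dvd_add_right (dvd_mul_right _ m)).mp (Nat.setGcd_dvd_of_mem hm))

theorem chainMixing_of_topTransitive_iterate (htt : ∀ k, 1 ≤ k → TopTransitive (f^[k])) :
    ChainMixing f := by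
  intro D hD x y
  obtain ⟨N, hN⟩ := Nat.exists_mem_closure_of_ge (LoopLengths f D x)
  obtain ⟨r, hr⟩ := (htt 1 le_rfl).exists_chainFrom hD x y
  rw [one_mul] at hr
  refine ⟨N + (r + 1), by omega, fun n hn => ?_⟩
  have hloop := chainFrom_of_mem_closure_loopLengths
    (hN (n - (r + 1)) (by omega) (by simp [setGcd_loopLengths_eq_one htt hD]))
  have hlen : n - (r + 1) + (r + 1) = n := by omega
  exact hlen ▸ hloop.append_s16 hr

theorem topMixing_of_shadowing_of_chainMixing (hsh : Shadowing f) (hcm : ChainMixing f) : TopMixing f := by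
  rintro U V hU hV ⟨u, hu⟩ ⟨v, hv⟩
  obtain ⟨EU, hEU, _, hEUU⟩ := UniformSpace.mem_nhds_iff_symm.mp (hU.mem_nhds hu)
  obtain ⟨EV, hEV, _, hEVV⟩ := UniformSpace.mem_nhds_iff_symm.mp (hV.mem_nhds hv)
  obtain ⟨D, hD, hshD⟩ := hsh _ (inter_mem hEU hEV)
  obtain ⟨N, -, hN⟩ := hcm D hD u v
  filter_upwards [eventually_ge_atTop N] with n hn
  obtain ⟨p, hp0, hpn, hp⟩ := (hN n hn).exists_pseudoOrbit fun _ => refl_mem_uniformity hD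
  obtain ⟨w, hw⟩ := hshD p hp
  have hw0 := hw 0
  have hwn := hw n
  rw [hp0, iterate_zero_apply] at hw0
  rw [hpn] at hwn
  exact ⟨w, hEUU (SetRel.symm (R := EU) hw0.1), hEVV (SetRel.symm (R := EV) hwn.2)⟩

end Dynamics

lemma TopMixing.topTransitive [TopologicalSpace X] {f : X → X} (hf : TopMixing f) :
    TopTransitive f :=
  fun U V hU hV hUne hVne => (hf U V hU hV hUne hVne).exists

lemma TopMixing.prodMap {Y : Type*} [TopologicalSpace X] [TopologicalSpace Y] {f : X → X}
    {g : Y → Y} (hf : TopMixing f) (hg : TopMixing g) : TopMixing (Prod.map f g) := by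
  rintro U V hU hV ⟨p, hp⟩ ⟨q, hq⟩
  obtain ⟨U₁, U₂, hU₁, hU₂, hp₁, hp₂, hU⟩ := isOpen_prod_iff.mp hU p.1 p.2 hp
  obtain ⟨V₁, V₂, hV₁, hV₂, hq₁, hq₂, hV⟩ := isOpen_prod_iff.mp hV q.1 q.2 hq
  filter_upwards [hf U₁ V₁ hU₁ hV₁ ⟨_, hp₁⟩ ⟨_, hq₁⟩, hg U₂ V₂ hU₂ hV₂ ⟨_, hp₂⟩ ⟨_, hq₂⟩]
    with n ⟨x, hxU, hxV⟩ ⟨y, hyU, hyV⟩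
  refine ⟨(x, y), hU ⟨hxU, hyU⟩, ?_⟩
  rw [mem_preimage, Prod.map_iterate]
  exact hV ⟨hxV, hyV⟩

theorem shadowing_totally_transitive_imp_weakly_mixing_general [UniformSpace X]
    (f : X → X) (hsh : Shadowing f)
    (htt : ∀ n : ℕ, 1 ≤ n → TopTransitive (f^[n])) :
    TopTransitive (Prod.map f f : X × X → X × X) :=
  have hmix := topMixing_of_shadowing_of_chainMixing hsh (chainMixing_of_topTransitive_iterate htt)
  (hmix.prodMap hmix).topTransitive

theorem shadowing_totally_transitive_imp_weakly_mixing [UniformSpace X]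
    (f : X → X) (hf : UniformContinuous f) (hsh : Shadowing f)
    (htt : ∀ n : ℕ, 1 ≤ n → TopTransitive (f^[n])) :
    TopTransitive (Prod.map f f : X × X → X × X) :=
  shadowing_totally_transitive_imp_weakly_mixing_general f hsh htt
end

section
/- Let (X, f) be a dynamical system on a compact uniform space with the topological shadowing property, and x ∈ Ω(f). Then for every entourage U there exist k ∈ ℕ and a minimal point y ∈ U[x] ∩ M(f) such that f^{nk}(y) ∈ U[x] for all n ∈ ℕ. -/
open Set Filter Function

variable {X : Type*}

/-! A non-wandering point `x` has a point `z` near it whose orbit comes back near `z` after `k`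
steps, so `z, f z, …, f^[k-1] z, z, f z, …` is a periodic pseudo-orbit. A shadowing point keeps
its `f^[k]`-orbit inside a closed neighbourhood of `z`; the points doing so form a closed
`f^[k]`-invariant set, which contains a minimal set of `f^[k]` by Zorn. Points of minimal sets
of a compact system return syndetically to each of their neighbourhoods, and
`f^[k]`-minimality implies `f`-minimality. -/

theorem Syndetic.of_preimage_mul {A : Set ℕ} {k : ℕ} (hk : 0 < k)
    (h : Syndetic {n | k * n ∈ A}) : Syndetic A := by
  obtain ⟨K, hK⟩ := h
  refine ⟨k * (K + 1), fun n => ?_⟩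
  obtain ⟨m, hm₁, hm₂, hm⟩ := hK (n / k + 1)
  have hlo : n < k * (n / k + 1) := Nat.lt_mul_div_succ n hk
  have hdiv : k * (n / k) ≤ n := Nat.mul_div_le n k
  refine ⟨k * m, ?_, ?_, hm⟩
  · nlinarith
  · nlinarith

theorem MinimalPt.of_iterate [TopologicalSpace X] {f : X → X} {k : ℕ} (hk : 0 < k) {y : X}
    (h : MinimalPt f^[k] y) : MinimalPt f y := fun V hV =>
  Syndetic.of_preimage_mul hk (by simpa only [← iterate_mul, mem_ofPred_eq] using h V hV)

def IsMinimalSet [TopologicalSpace X] (g : X → X) (M : Set X) : Prop :=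
  Minimal (fun B : Set X => B.Nonempty ∧ IsClosed B ∧ MapsTo g B B) M

theorem exists_isMinimalSet_subset [TopologicalSpace X] [CompactSpace X] (g : X → X)
    {A : Set X} (hne : A.Nonempty) (hA : IsClosed A) (hinv : MapsTo g A A) :
    ∃ M ⊆ A, IsMinimalSet g M := by
  refine zorn_superset_nonempty {B | B.Nonempty ∧ IsClosed B ∧ MapsTo g B B}
    (fun c hc hchain ⟨B₀, hB₀⟩ => ?_) A ⟨hne, hA, hinv⟩
  have : Nonempty c := ⟨⟨B₀, hB₀⟩⟩
  refine ⟨⋂₀ c, ⟨?_, isClosed_sInter fun B hB => (hc hB).2.1, ?_⟩,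
    fun B hB => sInter_subset_of_mem hB⟩
  · exact IsCompact.nonempty_sInter_of_directed_nonempty_isCompact_isClosed
      (IsChain.directedOn (r := fun B C : Set X => B ⊇ C) hchain.symm) (fun B hB => (hc hB).1)
      (fun B hB => (hc hB).2.1.isCompact) (fun B hB => (hc hB).2.1)
  · exact fun p hp B hB => (hc hB).2.2 (hp B hB)

theorem IsMinimalSet.subset_iUnion_preimage_iterate [TopologicalSpace X] {g : X → X}
    (hg : Continuous g) {M W : Set X} (hM : IsMinimalSet g M) (hW : IsOpen W)
    (hMW : (M ∩ W).Nonempty) : M ⊆ ⋃ m : ℕ, g^[m] ⁻¹' W := by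
  intro p hp
  by_contra hpW
  simp only [mem_iUnion, not_exists] at hpW
  set B := M ∩ ⋂ m : ℕ, g^[m] ⁻¹' Wᶜ
  have hB : B.Nonempty ∧ IsClosed B ∧ MapsTo g B B := by
    refine ⟨⟨p, hp, mem_iInter.2 hpW⟩,
      hM.prop.2.1.inter (isClosed_iInter fun m => hW.isClosed_compl.preimage (hg.iterate m)),
      fun q ⟨hqM, hq⟩ => ⟨hM.prop.2.2 hqM, mem_iInter.2 fun m => ?_⟩⟩
    simpa only [mem_preimage, ← iterate_succ_apply] using mem_iInter.1 hq (m + 1)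
  obtain ⟨q, hqM, hqW⟩ := hMW
  exact (mem_iInter.1 (hM.2 hB inter_subset_left hqM).2 0) hqW

theorem IsMinimalSet.minimalPt [TopologicalSpace X] [CompactSpace X] {g : X → X}
    (hg : Continuous g) {M : Set X} (hM : IsMinimalSet g M) {y : X} (hy : y ∈ M) :
    MinimalPt g y := by
  intro V hV
  obtain ⟨W, hWV, hW, hyW⟩ := mem_nhds_iff.1 hV
  obtain ⟨t, ht⟩ := hM.prop.2.1.isCompact.elim_finite_subcover (fun m : ℕ => g^[m] ⁻¹' W)
    (fun m => hW.preimage (hg.iterate m)) (hM.subset_iUnion_preimage_iterate hg hW ⟨y, hy, hyW⟩)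
  refine ⟨t.sup id, fun n => ?_⟩
  obtain ⟨m, hmt, hmW⟩ := mem_iUnion₂.1 (ht (hM.prop.2.2.iterate n hy))
  refine ⟨m + n, Nat.le_add_left n m, ?_, hWV ?_⟩
  · have : m ≤ t.sup id := Finset.le_sup (f := id) hmt
    omega
  · rwa [mem_preimage, ← iterate_add_apply] at hmW

theorem exists_minimalPt_forall_iterate_mem [TopologicalSpace X] [CompactSpace X] {g : X → X}
    (hg : Continuous g) {A : Set X} (hA : IsClosed A) {y₀ : X} (hy₀ : ∀ n, g^[n] y₀ ∈ A) :
    ∃ y, MinimalPt g y ∧ ∀ n, g^[n] y ∈ A := by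
  set B := ⋂ n : ℕ, g^[n] ⁻¹' A
  have hinv : MapsTo g B B := fun y hy => mem_iInter.2 fun n => by
    simpa only [mem_preimage, ← iterate_succ_apply] using mem_iInter.1 hy (n + 1)
  obtain ⟨M, hMB, hM⟩ := exists_isMinimalSet_subset g ⟨y₀, mem_iInter.2 hy₀⟩
    (isClosed_iInter fun n => hA.preimage (hg.iterate n)) hinv
  obtain ⟨y, hy⟩ := hM.prop.1
  exact ⟨y, hM.minimalPt hg hy, mem_iInter.1 (hMB hy)⟩

theorem iterate_mod_pseudoOrbit {f : X → X} {D : Set (X × X)} (hD : ∀ x, (x, x) ∈ D)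
    {k : ℕ} (hk : 0 < k) {z : X} (hz : (f^[k] z, z) ∈ D) (n : ℕ) :
    (f (f^[n % k] z), f^[(n + 1) % k] z) ∈ D := by
  rw [← Nat.mod_add_mod, ← iterate_succ_apply' f]
  obtain h | h := Nat.lt_or_eq_of_le (Nat.mod_lt n hk)
  · rw [Nat.mod_eq_of_lt h]
    exact hD _
  · rwa [← Nat.succ_eq_add_one, h, Nat.mod_self]

theorem Shadowing.exists_shadow_of_pseudoperiodic [UniformSpace X] {f : X → X}
    (hsh : Shadowing f) {E : Set (X × X)} (hE : E ∈ uniformity X) :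
    ∃ D ∈ uniformity X, ∀ {k : ℕ} {z : X}, 0 < k → (f^[k] z, z) ∈ D →
      ∃ y, ∀ n, (f^[n * k] y, z) ∈ E := by
  obtain ⟨D, hD, hshadow⟩ := hsh E hE
  refine ⟨D, hD, fun {k z} hk hz => ?_⟩
  obtain ⟨y, hy⟩ := hshadow _ (iterate_mod_pseudoOrbit (fun _ => refl_mem_uniformity hD) hk hz)
  exact ⟨y, fun n => by simpa only [Nat.mul_mod_left, iterate_zero_apply] using hy (n * k)⟩

theorem NonWandering.exists_pseudoperiodic [UniformSpace X] {f : X → X} {x : X}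
    (hx : NonWandering f x) {D : Set (X × X)} (hD : D ∈ uniformity X) :
    ∃ k, 0 < k ∧ ∃ z, (x, z) ∈ D ∧ (f^[k] z, z) ∈ D := by
  obtain ⟨D', hD', hD'symm, hD'D⟩ := comp_symm_mem_uniformity_sets hD
  obtain ⟨k, hk, z, hxz, hxfz⟩ := hx _ (UniformSpace.ball_mem_nhds x hD')
  exact ⟨k, hk, z, hD'D (subset_comp_self_of_mem_uniformity hD' hxz),
    hD'D (SetRel.prodMk_mem_comp (hD'symm.symm _ _ hxfz) hxz)⟩

theorem shadowing_nonwandering_minimal_returns [UniformSpace X] [CompactSpace X]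
    (f : X → X) (hf : UniformContinuous f) (hsh : Shadowing f)
    (x : X) (hx : NonWandering f x)
    (U : Set (X × X)) (hU : U ∈ uniformity X) :
    ∃ k : ℕ, 1 ≤ k ∧ ∃ y : X, (x, y) ∈ U ∧ MinimalPt f y ∧
      ∀ n : ℕ, 1 ≤ n → f^[n * k] y ∈ {z | (x, z) ∈ U} := by
  obtain ⟨V, hV, hVsymm, hVU⟩ := comp_symm_mem_uniformity_sets hU
  obtain ⟨E, hE, hEc, hEV⟩ := mem_uniformity_isClosed hV
  obtain ⟨D, hD, hshadow⟩ := hsh.exists_shadow_of_pseudoperiodic hE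
  obtain ⟨k, hk, z, hxz, hz⟩ := hx.exists_pseudoperiodic (inter_mem hD hV)
  obtain ⟨y₀, hy₀⟩ := hshadow hk hz.1
  have hEz : IsClosed {w | (w, z) ∈ E} := hEc.preimage (continuous_id.prodMk continuous_const)
  obtain ⟨y, hy, hyz⟩ := exists_minimalPt_forall_iterate_mem (hf.continuous.iterate k) hEz
    fun n => by simpa only [← iterate_mul, mul_comm, mem_ofPred_eq] using hy₀ n
  have hreturn (n : ℕ) : (x, f^[n * k] y) ∈ U := by
    rw [mul_comm, iterate_mul]
    exact hVU (SetRel.prodMk_mem_comp hxz.2 (hVsymm.symm _ _ (hEV (hyz n))))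
  exact ⟨k, hk, y, by simpa using hreturn 0, hy.of_iterate hk, fun n _ => hreturn n⟩
end
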